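/- Let S be an abelian group of commuting unitary self-adjoint operators on V not containing -1, stabilizing a subspace Q, and let t₁, t₂ be unitary operators such that t₁† t₂ anticommutes with some element of S. Then t₁(Q) and t₂(Q) are mutually orthogonal subspaces. -/

import Mathlib

/-!
If `u = t₁† t₂` anticommutes with a self-adjoint `s` fixing `ψ` and `φ`, then
`⟪ψ, u φ⟫ = ⟪ψ, u (s φ)⟫ = -⟪s ψ, u φ⟫ = -⟪ψ, u φ⟫`, so `⟪t₁ ψ, t₂ φ⟫ = ⟪ψ, u φ⟫` vanishes.
-/

open scoped InnerProductSpace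

namespace LinearMap

variable {𝕜 E : Type*} [RCLike 𝕜] [NormedAddCommGroup E] [InnerProductSpace 𝕜 E]

theorem IsSymmetric.inner_map_eq_zero_of_anticomm {s u : E →ₗ[𝕜] E} (hs : s.IsSymmetric)
    (hanti : u * s = -(s * u)) {ψ φ : E} (hψ : s ψ = ψ) (hφ : s φ = φ) :
    ⟪ψ, u φ⟫_𝕜 = 0 := by
  have h : ⟪ψ, u φ⟫_𝕜 = -⟪ψ, u φ⟫_𝕜 :=
    calc ⟪ψ, u φ⟫_𝕜 = ⟪ψ, (u * s) φ⟫_𝕜 := by rw [Module.End.mul_apply, hφ]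
      _ = -⟪s ψ, u φ⟫_𝕜 := by rw [hanti, neg_apply, inner_neg_right, Module.End.mul_apply, hs]
      _ = -⟪ψ, u φ⟫_𝕜 := by rw [hψ]
  exact CharZero.eq_neg_self_iff.mp h

end LinearMap

theorem stmt_11_general {V : Type*} [NormedAddCommGroup V] [InnerProductSpace ℂ V]
    [FiniteDimensional ℂ V] (S : Set (V →ₗ[ℂ] V))
    (hsa : ∀ s ∈ S, LinearMap.adjoint s = s)
    (t₁ t₂ : V →ₗ[ℂ] V)
    (hanti : ∃ s ∈ S, (LinearMap.adjoint t₁ * t₂) * s = -(s * (LinearMap.adjoint t₁ * t₂))) :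
    ∀ ψ ∈ {ψ : V | ∀ s ∈ S, s ψ = ψ}, ∀ φ ∈ {ψ : V | ∀ s ∈ S, s ψ = ψ},
      (inner ℂ (t₁ ψ) (t₂ φ) : ℂ) = 0 := by
  intro ψ hψ φ hφ
  obtain ⟨s, hsS, hs⟩ := hanti
  have hsym : s.IsSymmetric := (LinearMap.isSymmetric_iff_isSelfAdjoint s).mpr (hsa s hsS)
  rw [← LinearMap.adjoint_inner_right, ← Module.End.mul_apply]
  exact hsym.inner_map_eq_zero_of_anticomm hs (hψ s hsS) (hφ s hsS)

/-- Let `S` be an abelian group of commuting unitary self-adjoint operators on `V` not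
containing `-1`, stabilizing `Q = {ψ : sψ = ψ for all s ∈ S}`, and let `t₁, t₂` be
unitary operators such that `t₁† t₂` anticommutes with some element of `S`.  Then
`t₁(Q)` and `t₂(Q)` are mutually orthogonal. -/
theorem stmt_11 {V : Type*} [NormedAddCommGroup V] [InnerProductSpace ℂ V]
    [FiniteDimensional ℂ V] (S : Set (V →ₗ[ℂ] V))
    (hsa : ∀ s ∈ S, LinearMap.adjoint s = s)
    (hu : ∀ s ∈ S, LinearMap.adjoint s * s = 1)
    (hcomm : ∀ s ∈ S, ∀ s' ∈ S, s * s' = s' * s)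
    (hmul : ∀ s ∈ S, ∀ s' ∈ S, s * s' ∈ S)
    (hone : (1 : V →ₗ[ℂ] V) ∈ S)
    (hneg : (-1 : V →ₗ[ℂ] V) ∉ S)
    (t₁ t₂ : V →ₗ[ℂ] V)
    (ht₁ : LinearMap.adjoint t₁ * t₁ = 1) (ht₂ : LinearMap.adjoint t₂ * t₂ = 1)
    (hanti : ∃ s ∈ S, (LinearMap.adjoint t₁ * t₂) * s = -(s * (LinearMap.adjoint t₁ * t₂))) :
    ∀ ψ ∈ {ψ : V | ∀ s ∈ S, s ψ = ψ}, ∀ φ ∈ {ψ : V | ∀ s ∈ S, s ψ = ψ},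
      (inner ℂ (t₁ ψ) (t₂ φ) : ℂ) = 0 :=
  stmt_11_general S hsa t₁ t₂ hanti
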